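/- An infinite word u satisfies property R_2 if and only if u is Sturmian. -/

import Mathlib

/-!
Cut a recurrent word at the successive occurrences of a factor `w`: this writes it as the
sequence of return words `returnWord u w e`, and if that sequence is eventually periodic so is
the word.

`R₂ → Sturmian`. Property `R₂` makes `u` recurrent, and aperiodic: in a periodic word the
prefix of the least period has a single return word. Aperiodicity gives a right special factor
of every length. Two of the same length would produce, over two letters, a factor `s` with all
four extensions `asx, asy, bsx, bsy`. The two return words of `s` are then told apart by the
letter after `s`, and `R₂` for `sx` and `sy` forces all runs of either return word in the
sequence of return words to have one fixed length, so `u` would be eventually periodic.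
Hence `C (n + 1) = C n + 1`.

`Sturmian → R₂`. Complexity `n + 1` and aperiodicity make `u` recurrent, and every factor has
at least two return words. The longest common suffix of two distinct complete return words
`v ++ w`, `v' ++ w` is left special and ends with `w`. Among three return words, either two such
branchings happen at different depths, and the unique left special factor of the smaller
length puts an occurrence of `w` strictly inside a return word, or all three complete return
words branch at one depth, with three distinct letters in front.
-/

variable {A : Type*}

/-- The factor of `u` of length `n` starting at position `j`. -/
def factorAt (u : ℕ → A) (j n : ℕ) : List A :=
  (List.range n).map (fun i => u (j + i))

/-- `j` is an occurrence of the finite word `w` in `u`. -/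
def OccursAt (u : ℕ → A) (w : List A) (j : ℕ) : Prop :=
  factorAt u j w.length = w

/-- `w` is a factor of the infinite word `u`. -/
def IsFactor (u : ℕ → A) (w : List A) : Prop :=
  ∃ j, OccursAt u w j

/-- `v` is a return word of `w` in `u`: the word between two successive occurrences of `w`. -/
def IsReturnWord (u : ℕ → A) (w v : List A) : Prop :=
  ∃ j k, j < k ∧ OccursAt u w j ∧ OccursAt u w k ∧
    (∀ l, j < l → l < k → ¬ OccursAt u w l) ∧ v = factorAt u j (k - j)

/-- The set `R(w)` of return words of `w` in `u`. -/
def returnWords (u : ℕ → A) (w : List A) : Set (List A) :=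
  {v | IsReturnWord u w v}

/-- Property `R_m`: every factor of `u` has exactly `m` return words. -/
def PropertyR (u : ℕ → A) (m : ℕ) : Prop :=
  ∀ w, IsFactor u w → (returnWords u w).Finite ∧ (returnWords u w).ncard = m

/-- The set of left extensions of `w`. -/
def leftExt (u : ℕ → A) (w : List A) : Set A := {a | IsFactor u (a :: w)}

/-- The set of right extensions of `w`. -/
def rightExt (u : ℕ → A) (w : List A) : Set A := {b | IsFactor u (w ++ [b])}

def LeftSpecial (u : ℕ → A) (w : List A) : Prop := 2 ≤ (leftExt u w).ncard

def RightSpecial (u : ℕ → A) (w : List A) : Prop := 2 ≤ (rightExt u w).ncard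

/-- The set of pairs `(a, b)` such that `a w b` is a factor of `u`. -/
def extPairs (u : ℕ → A) (w : List A) : Set (A × A) :=
  {p | IsFactor u (p.1 :: (w ++ [p.2]))}

/-- The bilateral order `B(w)`. -/
noncomputable def bilateralOrder (u : ℕ → A) (w : List A) : ℤ :=
  ((extPairs u w).ncard : ℤ) - (leftExt u w).ncard - (rightExt u w).ncard + 1

/-- `w` is a weak bispecial factor of `u`. -/
def WeakBispecial (u : ℕ → A) (w : List A) : Prop :=
  IsFactor u w ∧ bilateralOrder u w < 0

/-- The factor complexity of `u`. -/
noncomputable def Complexity (u : ℕ → A) (n : ℕ) : ℕ :=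
  {w : List A | w.length = n ∧ IsFactor u w}.ncard

/-- `u` is recurrent: every factor occurs at least twice. -/
def Recurrent (u : ℕ → A) : Prop :=
  ∀ w, IsFactor u w → ∃ j k, j < k ∧ OccursAt u w j ∧ OccursAt u w k

/-- `u` is uniformly recurrent. -/
def UniformlyRecurrent (u : ℕ → A) : Prop :=
  ∀ n : ℕ, ∃ N : ℕ, ∀ w, IsFactor u w → w.length = N →
    ∀ v, IsFactor u v → v.length = n → v <:+: w

def EventuallyPeriodic (u : ℕ → A) : Prop :=
  ∃ p, 0 < p ∧ ∃ N, ∀ n, N ≤ n → u (n + p) = u n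

/-- `w` is a maximal right special factor. -/
def MaximalRightSpecial (u : ℕ → A) (w : List A) : Prop :=
  IsFactor u w ∧ RightSpecial u w ∧
    ∀ v, IsFactor u v → RightSpecial u v → w <:+ v → v = w

/-- The return word `v` of `w` starts with the letter `b`. -/
def StartsWithLetter (w v : List A) (b : A) : Prop := (w ++ [b]) <+: (v ++ w)

open Nat (nth)

section Factors

variable {u : ℕ → A}

@[simp] lemma length_factorAt (u : ℕ → A) (j n : ℕ) : (factorAt u j n).length = n := by
  simp [factorAt]

@[simp] lemma getElem_factorAt (u : ℕ → A) (j n i : ℕ) (h : i < (factorAt u j n).length) :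
    (factorAt u j n)[i] = u (j + i) := by
  simp [factorAt]

lemma factorAt_congr {j j' n : ℕ} (h : ∀ i < n, u (j + i) = u (j' + i)) :
    factorAt u j n = factorAt u j' n :=
  List.ext_getElem (by simp) fun i hi _ => by simpa using h i (by simpa using hi)

lemma factorAt_add (u : ℕ → A) (j m n : ℕ) :
    factorAt u j (m + n) = factorAt u j m ++ factorAt u (j + m) n := by
  simp [factorAt, List.range_add, Function.comp_def, Nat.add_assoc]

lemma factorAt_succ (u : ℕ → A) (j n : ℕ) :
    factorAt u j (n + 1) = u j :: factorAt u (j + 1) n := by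
  rw [Nat.add_comm, factorAt_add]
  simp [factorAt]

lemma factorAt_drop (u : ℕ → A) (j : ℕ) {m n : ℕ} (h : m ≤ n) :
    (factorAt u j n).drop m = factorAt u (j + m) (n - m) := by
  obtain ⟨k, rfl⟩ := Nat.exists_eq_add_of_le h
  simp [factorAt_add]

lemma factorAt_take (u : ℕ → A) (j : ℕ) {m n : ℕ} (h : m ≤ n) :
    (factorAt u j n).take m = factorAt u j m := by
  obtain ⟨k, rfl⟩ := Nat.exists_eq_add_of_le h
  simp [factorAt_add]

lemma occursAt_factorAt (u : ℕ → A) (j n : ℕ) : OccursAt u (factorAt u j n) j := by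
  simp [OccursAt]

lemma isFactor_factorAt (u : ℕ → A) (j n : ℕ) : IsFactor u (factorAt u j n) :=
  ⟨j, occursAt_factorAt u j n⟩

lemma OccursAt.getElem {w : List A} {j : ℕ} (hw : OccursAt u w j) {i : ℕ}
    (hi : i < w.length) : u (j + i) = w[i] := by
  simp [← List.getElem_of_eq hw (by simpa using hi)]

lemma OccursAt.of_agree {w : List A} {j j' : ℕ} (hw : OccursAt u w j)
    (h : ∀ i < w.length, u (j' + i) = u (j + i)) : OccursAt u w j' :=
  (factorAt_congr h).trans hw

lemma occursAt_append {v w : List A} {j : ℕ} :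
    OccursAt u (v ++ w) j ↔ OccursAt u v j ∧ OccursAt u w (j + v.length) := by
  unfold OccursAt
  rw [List.length_append, factorAt_add]
  exact ⟨fun h => List.append_inj h (by simp), fun h => by rw [h.1, h.2]⟩

lemma occursAt_singleton {c : A} {j : ℕ} : OccursAt u [c] j ↔ u j = c := by
  simp [OccursAt, factorAt]

lemma occursAt_cons {c : A} {w : List A} {j : ℕ} :
    OccursAt u (c :: w) j ↔ u j = c ∧ OccursAt u w (j + 1) := by
  rw [← List.singleton_append, occursAt_append, occursAt_singleton, List.length_singleton]

lemma occursAt_snoc {w : List A} {c : A} {j : ℕ} :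
    OccursAt u (w ++ [c]) j ↔ OccursAt u w j ∧ u (j + w.length) = c := by
  rw [occursAt_append, occursAt_singleton]

lemma IsFactor.infix {v w : List A} (hw : IsFactor u w) (hvw : v <:+: w) : IsFactor u v := by
  obtain ⟨s, t, rfl⟩ := hvw
  obtain ⟨j, hj⟩ := hw
  exact ⟨j + s.length, (occursAt_append.1 (occursAt_append.1 hj).1).2⟩

lemma mem_rightExt {w : List A} {j : ℕ} (hw : OccursAt u w j) :
    u (j + w.length) ∈ rightExt u w :=
  ⟨j, occursAt_snoc.2 ⟨hw, rfl⟩⟩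

lemma mem_leftExt {w : List A} {j : ℕ} (hw : OccursAt u w (j + 1)) : u j ∈ leftExt u w :=
  ⟨j, occursAt_cons.2 ⟨rfl, hw⟩⟩

lemma rightSpecial_of_mem [Finite A] {w : List A} {a b : A} (hab : a ≠ b)
    (ha : a ∈ rightExt u w) (hb : b ∈ rightExt u w) : RightSpecial u w :=
  Set.one_lt_ncard_iff (Set.toFinite _) |>.2 ⟨a, b, ha, hb, hab⟩

lemma leftSpecial_of_mem [Finite A] {w : List A} {a b : A} (hab : a ≠ b)
    (ha : a ∈ leftExt u w) (hb : b ∈ leftExt u w) : LeftSpecial u w :=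
  Set.one_lt_ncard_iff (Set.toFinite _) |>.2 ⟨a, b, ha, hb, hab⟩

end Factors

lemma card_add_card_filter_le_sum {ι : Type*} (s : Finset ι) (p : ι → Prop) [DecidablePred p]
    {f : ι → ℕ} (h₁ : ∀ i ∈ s, 1 ≤ f i) (h₂ : ∀ i ∈ s, p i → 2 ≤ f i) :
    s.card + (s.filter p).card ≤ ∑ i ∈ s, f i := by
  rw [Finset.card_filter, Finset.card_eq_sum_ones, ← Finset.sum_add_distrib]
  refine Finset.sum_le_sum fun i hi => ?_
  have := h₁ i hi
  split_ifs with hpi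
  · exact h₂ i hi hpi
  · exact this

lemma sum_eq_card_add_card_filter {ι : Type*} (s : Finset ι) (p : ι → Prop) [DecidablePred p]
    {f : ι → ℕ} (h₁ : ∀ i ∈ s, 1 ≤ f i) (h₂ : ∀ i ∈ s, f i ≤ 2)
    (hp : ∀ i ∈ s, p i ↔ 2 ≤ f i) :
    ∑ i ∈ s, f i = s.card + (s.filter p).card := by
  rw [Finset.card_filter, Finset.card_eq_sum_ones, ← Finset.sum_add_distrib]
  refine Finset.sum_congr rfl fun i hi => ?_
  have := h₁ i hi
  have := h₂ i hi
  by_cases hpi : p i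
  · rw [if_pos hpi]; have := (hp i hi).1 hpi; omega
  · rw [if_neg hpi]; have := mt (hp i hi).2 hpi; omega

section Complexity

open scoped Classical

variable {u : ℕ → A}

lemma finite_factors_of_length [Finite A] (u : ℕ → A) (l : ℕ) :
    {w : List A | w.length = l ∧ IsFactor u w}.Finite :=
  (List.finite_length_eq A l).subset fun _ hw => hw.1

noncomputable def factorsOfLength [Finite A] (u : ℕ → A) (l : ℕ) : Finset (List A) :=
  (finite_factors_of_length u l).toFinset

lemma mem_factorsOfLength [Finite A] {l : ℕ} {w : List A} :
    w ∈ factorsOfLength u l ↔ w.length = l ∧ IsFactor u w := by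
  simp [factorsOfLength]

lemma complexity_eq_card [Finite A] (u : ℕ → A) (l : ℕ) :
    Complexity u l = (factorsOfLength u l).card :=
  Set.ncard_eq_toFinset_card _ _

lemma complexity_zero (u : ℕ → A) : Complexity u 0 = 1 := by
  have : {w : List A | w.length = 0 ∧ IsFactor u w} = {[]} := by
    ext w
    simpa using fun hw : w = [] => hw ▸ isFactor_factorAt u 0 0
  rw [Complexity, this, Set.ncard_singleton]

lemma complexity_succ_eq_sum_rightExt [Finite A] (u : ℕ → A) (l : ℕ) :
    Complexity u (l + 1) = ∑ w ∈ factorsOfLength u l, (rightExt u w).ncard := by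
  have hsplit : factorsOfLength u (l + 1) = (factorsOfLength u l).biUnion
      fun w => (Set.toFinite (rightExt u w)).toFinset.image fun b => w ++ [b] := by
    ext v
    simp only [mem_factorsOfLength, Finset.mem_biUnion, Finset.mem_image,
      Set.Finite.mem_toFinset, rightExt, Set.mem_ofPred_eq]
    constructor
    · rintro ⟨hl, hv⟩
      obtain ⟨w, b, rfl⟩ := List.eq_nil_or_concat' v |>.resolve_left (by rintro rfl; simp at hl)
      exact ⟨w, ⟨by simpa using hl, hv.infix (List.infix_append' [] w [b])⟩, b, hv, rfl⟩
    · rintro ⟨w, ⟨hl, -⟩, b, hb, rfl⟩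
      exact ⟨by simp [hl], hb⟩
  rw [complexity_eq_card, hsplit, Finset.card_biUnion]
  · refine Finset.sum_congr rfl fun w _ => ?_
    rw [Finset.card_image_of_injective _ fun b b' h => by simpa using h,
      Set.ncard_eq_toFinset_card]
  · intro w _ w' _ hne
    simp only [Function.onFun, Finset.disjoint_left, Finset.mem_image]
    rintro _ ⟨b, -, rfl⟩ ⟨b', -, he⟩
    exact hne (List.append_inj' he rfl).1.symm

lemma complexity_succ_eq_sum_leftExt [Finite A] (u : ℕ → A) (l : ℕ) :
    Complexity u (l + 1) = ∑ w ∈ factorsOfLength u l, (leftExt u w).ncard := by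
  have hsplit : factorsOfLength u (l + 1) = (factorsOfLength u l).biUnion
      fun w => (Set.toFinite (leftExt u w)).toFinset.image fun a => a :: w := by
    ext v
    simp only [mem_factorsOfLength, Finset.mem_biUnion, Finset.mem_image,
      Set.Finite.mem_toFinset, leftExt, Set.mem_ofPred_eq]
    constructor
    · rintro ⟨hl, hv⟩
      obtain ⟨a, w, rfl⟩ := List.exists_cons_of_ne_nil (List.ne_nil_of_length_eq_add_one hl)
      exact ⟨w, ⟨by simpa using hl, hv.infix (List.infix_cons (List.infix_refl w))⟩, a, hv,
        rfl⟩
    · rintro ⟨w, ⟨hl, -⟩, a, ha, rfl⟩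
      exact ⟨by simp [hl], ha⟩
  rw [complexity_eq_card, hsplit, Finset.card_biUnion]
  · refine Finset.sum_congr rfl fun w _ => ?_
    rw [Finset.card_image_of_injective _ fun a a' h => by simpa using h,
      Set.ncard_eq_toFinset_card]
  · intro w _ w' _ hne
    simp only [Function.onFun, Finset.disjoint_left, Finset.mem_image]
    rintro _ ⟨a, -, rfl⟩ ⟨a', -, he⟩
    exact hne (List.cons_eq_cons.1 he).2.symm


lemma one_le_ncard_rightExt [Finite A] {w : List A} (hw : IsFactor u w) :
    1 ≤ (rightExt u w).ncard := by
  obtain ⟨j, hj⟩ := hw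
  exact (Set.ncard_pos (Set.toFinite _)).2 ⟨_, mem_rightExt hj⟩

lemma Recurrent.one_le_ncard_leftExt [Finite A] (hu : Recurrent u) {w : List A}
    (hw : IsFactor u w) : 1 ≤ (leftExt u w).ncard := by
  obtain ⟨j, k, hjk, -, hk⟩ := hu w hw
  obtain ⟨k, rfl⟩ : ∃ k', k = k' + 1 := ⟨k - 1, by omega⟩
  exact (Set.ncard_pos (Set.toFinite _)).2 ⟨_, mem_leftExt hk⟩

lemma complexity_add_card_rightSpecial_le [Finite A] (u : ℕ → A) (l : ℕ) :
    Complexity u l + ((factorsOfLength u l).filter (RightSpecial u)).card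
      ≤ Complexity u (l + 1) := by
  rw [complexity_succ_eq_sum_rightExt, complexity_eq_card]
  exact card_add_card_filter_le_sum _ _
    (fun w hw => one_le_ncard_rightExt (mem_factorsOfLength.1 hw).2) fun _ _ h => h

lemma complexity_succ_eq_add_card_rightSpecial [Fintype A] (hA : Fintype.card A = 2)
    (u : ℕ → A) (l : ℕ) :
    Complexity u (l + 1)
      = Complexity u l + ((factorsOfLength u l).filter (RightSpecial u)).card := by
  rw [complexity_succ_eq_sum_rightExt, complexity_eq_card]
  exact sum_eq_card_add_card_filter _ _
    (fun w hw => one_le_ncard_rightExt (mem_factorsOfLength.1 hw).2)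
    (fun w _ => hA ▸ Nat.card_eq_fintype_card (α := A) ▸ Set.ncard_le_card _)
    fun _ _ => Iff.rfl

lemma Recurrent.complexity_add_card_leftSpecial_le [Finite A] (hu : Recurrent u) (l : ℕ) :
    Complexity u l + ((factorsOfLength u l).filter (LeftSpecial u)).card
      ≤ Complexity u (l + 1) := by
  rw [complexity_succ_eq_sum_leftExt, complexity_eq_card]
  exact card_add_card_filter_le_sum _ _
    (fun w hw => hu.one_le_ncard_leftExt (mem_factorsOfLength.1 hw).2) fun _ _ h => h

lemma Recurrent.eq_of_leftSpecial [Finite A] (hu : Recurrent u) {v w : List A}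
    (hC : Complexity u (v.length + 1) ≤ Complexity u v.length + 1)
    (hv : IsFactor u v) (hw : IsFactor u w) (hl : w.length = v.length)
    (hvs : LeftSpecial u v) (hws : LeftSpecial u w) : v = w := by
  have := hu.complexity_add_card_leftSpecial_le v.length
  have hle : ((factorsOfLength u v.length).filter (LeftSpecial u)).card ≤ 1 := by omega
  exact Finset.card_le_one.1 hle v (by simpa [mem_factorsOfLength] using ⟨hv, hvs⟩) w
    (by simpa [mem_factorsOfLength] using ⟨⟨hl, hw⟩, hws⟩)

lemma eventuallyPeriodic_of_forall_not_rightSpecial [Finite A] {n : ℕ}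
    (h : ∀ w, IsFactor u w → w.length = n → ¬ RightSpecial u w) : EventuallyPeriodic u := by
  obtain ⟨j, -, k, -, hjk, heq⟩ := Set.infinite_univ.exists_ne_map_eq_of_mapsTo
    (f := fun j => factorAt u j n) (t := {w | w.length = n ∧ IsFactor u w})
    (fun j _ => ⟨length_factorAt u j n, isFactor_factorAt u j n⟩) (finite_factors_of_length u n)
  wlog hlt : j < k generalizing j k
  · exact this k j hjk.symm heq.symm (by omega)
  have hnext : ∀ i, factorAt u (j + i) n = factorAt u (k + i) n →
      u (j + i + n) = u (k + i + n) := by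
    intro i hi
    by_contra hne
    have hj := mem_rightExt (occursAt_factorAt u (j + i) n)
    have hk := mem_rightExt (occursAt_factorAt u (k + i) n)
    rw [← hi] at hk
    simp only [length_factorAt] at hj hk
    exact h _ (isFactor_factorAt u _ _) (length_factorAt u _ _) (rightSpecial_of_mem hne hj hk)
  have key : ∀ m, u (j + m) = u (k + m) := by
    intro m
    induction m using Nat.strong_induction_on with
    | _ m ih =>
      by_cases hm : m < n
      · have hj : OccursAt u (factorAt u k n) j := heq ▸ occursAt_factorAt u j n
        have := hj.getElem (i := m) (by simpa using hm)
        rwa [getElem_factorAt] at this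
      · obtain ⟨i, rfl⟩ : ∃ i, m = i + n := ⟨m - n, by omega⟩
        simpa [Nat.add_assoc] using
          hnext i (factorAt_congr fun t ht => by simpa [Nat.add_assoc] using ih (i + t) (by omega))
  refine ⟨k - j, by omega, j, fun x hx => ?_⟩
  have := key (x - j)
  rw [show j + (x - j) = x by omega, show k + (x - j) = x + (k - j) by omega] at this
  exact this.symm

lemma eventuallyPeriodic_of_complexity_succ_le [Finite A] {n : ℕ}
    (h : Complexity u (n + 1) ≤ Complexity u n) : EventuallyPeriodic u :=
  eventuallyPeriodic_of_forall_not_rightSpecial fun w hw hl hs => by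
    have := complexity_add_card_rightSpecial_le u n
    have : 0 < ((factorsOfLength u n).filter (RightSpecial u)).card :=
      Finset.card_pos.2 ⟨w, Finset.mem_filter.2 ⟨mem_factorsOfLength.2 ⟨hl, hw⟩, hs⟩⟩
    omega

lemma eventuallyPeriodic_of_complexity_le [Finite A] {n : ℕ} (h : Complexity u n ≤ n) :
    EventuallyPeriodic u := by
  by_contra hu
  have : ∀ m, m + 1 ≤ Complexity u m := by
    intro m
    induction m with
    | zero => simp [complexity_zero]
    | succ m ih => have := mt (eventuallyPeriodic_of_complexity_succ_le (n := m)) hu; omega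
  have := this n
  omega

end Complexity

lemma Nat.exists_nth_le_and_lt_nth_succ {p : ℕ → Prop} (hp : (Set.ofPred p).Infinite) {x : ℕ}
    (hx : nth p 0 ≤ x) : ∃ e, nth p e ≤ x ∧ x < nth p (e + 1) := by
  classical
  have hex : ∃ e, x < nth p (e + 1) :=
    ⟨x, Nat.lt_of_lt_of_le (Nat.lt_add_one x) (Nat.le_nth fun hf => absurd hf hp)⟩
  refine ⟨Nat.find hex, ?_, Nat.find_spec hex⟩
  rcases h : Nat.find hex with _ | e
  · exact hx
  · exact not_lt.1 (Nat.find_min hex (by omega))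

section ReturnWords

variable {u : ℕ → A} {w : List A}

lemma Recurrent.infinite_occursAt (hu : Recurrent u) (hw : IsFactor u w) :
    (Set.ofPred (OccursAt u w)).Infinite := by
  intro hfin
  obtain ⟨j, hj, hmax⟩ := hfin.exists_maximal hw
  obtain ⟨p, q, hpq, -, hq⟩ := hu _ (isFactor_factorAt u 0 (j + w.length))
  have hqj : OccursAt u w (q + j) := hj.of_agree fun i hi => by
    have := hq.getElem (i := j + i) (by rw [length_factorAt]; omega)
    simpa [Nat.add_assoc] using this
  have := hmax hqj (by omega)
  omega

noncomputable def returnWord (u : ℕ → A) (w : List A) (e : ℕ) : List A :=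
  factorAt u (nth (OccursAt u w) e) (nth (OccursAt u w) (e + 1) - nth (OccursAt u w) e)

lemma length_returnWord (e : ℕ) :
    (returnWord u w e).length = nth (OccursAt u w) (e + 1) - nth (OccursAt u w) e := by
  simp [returnWord]

lemma occursAt_returnWord (e : ℕ) : OccursAt u (returnWord u w e) (nth (OccursAt u w) e) :=
  occursAt_factorAt u _ _

lemma nth_succ_eq_add_length_returnWord (hw : (Set.ofPred (OccursAt u w)).Infinite) (e : ℕ) :
    nth (OccursAt u w) (e + 1) = nth (OccursAt u w) e + (returnWord u w e).length := by
  have := Nat.nth_strictMono hw (Nat.lt_add_one e)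
  rw [length_returnWord]
  omega

lemma returnWord_ne_nil (hw : (Set.ofPred (OccursAt u w)).Infinite) (e : ℕ) :
    returnWord u w e ≠ [] := by
  have := Nat.nth_strictMono hw (Nat.lt_add_one e)
  rw [← List.length_pos_iff, length_returnWord]
  omega

lemma occursAt_returnWord_append (hw : (Set.ofPred (OccursAt u w)).Infinite) (e : ℕ) :
    OccursAt u (returnWord u w e ++ w) (nth (OccursAt u w) e) := by
  refine occursAt_append.2 ⟨occursAt_returnWord e, ?_⟩
  rw [← nth_succ_eq_add_length_returnWord hw]
  exact Nat.nth_mem_of_infinite hw _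

lemma returnWords_eq_range (hu : Recurrent u) (hw : IsFactor u w) :
    returnWords u w = Set.range (returnWord u w) := by
  have hinf := hu.infinite_occursAt hw
  ext v
  constructor
  · rintro ⟨j, k, hjk, hj, hk, hbet, rfl⟩
    obtain ⟨e, rfl⟩ := Nat.subset_range_nth (p := OccursAt u w) hj
    have hk' : k = nth (OccursAt u w) (e + 1) := by
      rcases lt_trichotomy k (nth (OccursAt u w) (e + 1)) with h | h | h
      · exact absurd (Nat.le_nth_of_lt_nth_succ h hk) (by omega)
      · exact h
      · exact absurd (Nat.nth_mem_of_infinite hinf _)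
          (hbet _ (Nat.nth_strictMono hinf (Nat.lt_add_one e)) h)
    exact ⟨e, by rw [returnWord, hk']⟩
  · rintro ⟨e, rfl⟩
    exact ⟨_, _, Nat.nth_strictMono hinf (Nat.lt_add_one e), Nat.nth_mem_of_infinite hinf _,
      Nat.nth_mem_of_infinite hinf _,
      fun l h₁ h₂ hl => absurd (Nat.le_nth_of_lt_nth_succ h₂ hl) (by omega), rfl⟩

lemma getElem?_returnWord_append_length (hw : (Set.ofPred (OccursAt u w)).Infinite) (e : ℕ) :
    (returnWord u w e ++ w)[w.length]? = some (u (nth (OccursAt u w) e + w.length)) := by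
  have hlen : w.length < (returnWord u w e ++ w).length := by
    simpa using List.length_pos_iff.2 (returnWord_ne_nil hw e)
  rw [List.getElem?_eq_getElem hlen, (occursAt_returnWord_append hw e).getElem hlen]

lemma getLast?_returnWord (hw : (Set.ofPred (OccursAt u w)).Infinite) (e : ℕ) :
    (returnWord u w e).getLast? = some (u (nth (OccursAt u w) (e + 1) - 1)) := by
  have hne := returnWord_ne_nil hw e
  have hlen := List.length_pos_iff.2 hne
  rw [List.getLast?_eq_getElem?, List.getElem?_eq_getElem (by omega),
    ← (occursAt_returnWord (u := u) e).getElem (by omega), nth_succ_eq_add_length_returnWord hw]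
  congr 2
  omega

lemma letter_after_eq_of_returnWord_eq (hw : (Set.ofPred (OccursAt u w)).Infinite) {e e' : ℕ}
    (h : returnWord u w e = returnWord u w e') :
    u (nth (OccursAt u w) e + w.length) = u (nth (OccursAt u w) e' + w.length) := by
  rw [← Option.some_inj, ← getElem?_returnWord_append_length hw, h,
    getElem?_returnWord_append_length hw]

lemma letter_before_eq_of_returnWord_eq (hw : (Set.ofPred (OccursAt u w)).Infinite) {e e' : ℕ}
    (h : returnWord u w e = returnWord u w e') :
    u (nth (OccursAt u w) (e + 1) - 1) = u (nth (OccursAt u w) (e' + 1) - 1) := by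
  rw [← Option.some_inj, ← getLast?_returnWord hw, h, getLast?_returnWord hw]

lemma factorAt_nth_eq_flatten (hw : (Set.ofPred (OccursAt u w)).Infinite) (e m : ℕ) :
    factorAt u (nth (OccursAt u w) e) (nth (OccursAt u w) (e + m) - nth (OccursAt u w) e)
      = ((List.range m).map fun t => returnWord u w (e + t)).flatten := by
  induction m with
  | zero => simp [factorAt]
  | succ m ih =>
    have hmono := Nat.nth_monotone hw (show e ≤ e + m by omega)
    rw [← Nat.add_assoc, nth_succ_eq_add_length_returnWord hw]
    set a := nth (OccursAt u w) e
    set b := nth (OccursAt u w) (e + m)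
    rw [show b + (returnWord u w (e + m)).length - a = (b - a) + (returnWord u w (e + m)).length
      by omega, factorAt_add, ih, show a + (b - a) = b by omega]
    simp [List.range_succ, returnWord, b]

lemma eventuallyPeriodic_of_returnWord_add (hw : (Set.ofPred (OccursAt u w)).Infinite)
    {e₀ p : ℕ} (hp : 0 < p)
    (h : ∀ e, e₀ ≤ e → returnWord u w (e + p) = returnWord u w e) :
    EventuallyPeriodic u := by
  set L := nth (OccursAt u w) (e₀ + p) - nth (OccursAt u w) e₀
  have hshift : ∀ e, e₀ ≤ e → nth (OccursAt u w) (e + p) = nth (OccursAt u w) e + L := by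
    intro e he
    induction e, he using Nat.le_induction with
    | base => have := Nat.nth_monotone hw (show e₀ ≤ e₀ + p by omega); omega
    | succ e he ih =>
      rw [show e + 1 + p = e + p + 1 by omega, nth_succ_eq_add_length_returnWord hw, ih,
        nth_succ_eq_add_length_returnWord hw, h e he]
      omega
  refine ⟨L, ?_, nth (OccursAt u w) e₀, fun z hz => ?_⟩
  · have := Nat.nth_strictMono hw (show e₀ < e₀ + p by omega); omega
  obtain ⟨e, hez, hze⟩ := Nat.exists_nth_le_and_lt_nth_succ hw
    ((Nat.nth_monotone hw (Nat.zero_le e₀)).trans hz)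
  have he : e₀ ≤ e := by
    by_contra! he
    have := Nat.nth_monotone hw (show e + 1 ≤ e₀ by omega)
    omega
  have hd : z - nth (OccursAt u w) e < (returnWord u w e).length := by
    rw [length_returnWord]; omega
  have hocc : OccursAt u (returnWord u w e) (nth (OccursAt u w) (e + p)) :=
    h e he ▸ occursAt_returnWord (e + p)
  have h₁ := hocc.getElem hd
  have h₂ := (occursAt_returnWord (u := u) (w := w) e).getElem hd
  rw [hshift e he, show nth (OccursAt u w) e + L + (z - nth (OccursAt u w) e) = z + L by omega]
    at h₁
  rw [show nth (OccursAt u w) e + (z - nth (OccursAt u w) e) = z by omega] at h₂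
  rw [h₁, h₂]

end ReturnWords

section Periodicity

variable {u : ℕ → A}

lemma PropertyR.recurrent {m : ℕ} (hR : PropertyR u m) (hm : m ≠ 0) : Recurrent u := by
  intro w hw
  obtain ⟨v, j, k, hjk, hj, hk, -⟩ :=
    Set.nonempty_of_ncard_ne_zero (s := returnWords u w) (by rwa [(hR w hw).2])
  exact ⟨j, k, hjk, hj, hk⟩

/-- A late occurrence of a long prefix carries the period back to the start. -/
lemma Recurrent.periodic_of_eventuallyPeriodic (hu : Recurrent u) (h : EventuallyPeriodic u) :
    ∃ p, 0 < p ∧ Function.Periodic u p := by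
  obtain ⟨p, hp, N, hN⟩ := h
  obtain ⟨c, hc, hNc⟩ := (hu.infinite_occursAt (isFactor_factorAt u 0 (N + p))).exists_gt N
  refine ⟨p, hp, fun x => ?_⟩
  by_cases hx : N ≤ x
  · exact hN x hx
  have h₁ := hc.getElem (i := x + p) (by rw [length_factorAt]; omega)
  have h₂ := hc.getElem (i := x) (by rw [length_factorAt]; omega)
  simp only [getElem_factorAt, Nat.zero_add] at h₁ h₂
  rw [← h₁, ← h₂, ← Nat.add_assoc, hN _ (by omega)]

lemma Function.Periodic.nat_sub {p q : ℕ} (hp : Function.Periodic u p)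
    (hq : Function.Periodic u q) (hpq : p ≤ q) : Function.Periodic u (q - p) := fun x => by
  rw [← hp, show x + (q - p) + p = x + q by omega, hq]

lemma Function.Periodic.of_occursAt_factorAt {p s : ℕ} (hp : Function.Periodic u p)
    (hp₀ : 0 < p) (hs : OccursAt u (factorAt u 0 p) s) : Function.Periodic u s := fun x => by
  induction x using Nat.strong_induction_on with
  | _ x ih =>
    by_cases hx : x < p
    · have := hs.getElem (i := x) (by simpa using hx)
      rwa [getElem_factorAt, Nat.zero_add, Nat.add_comm] at this
    · obtain ⟨y, rfl⟩ : ∃ y, x = y + p := ⟨x - p, by omega⟩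
      rw [show y + p + s = y + s + p by omega, hp, hp, ih y (by omega)]

lemma PropertyR.not_eventuallyPeriodic {m : ℕ} (hR : PropertyR u m) (hm : 2 ≤ m) :
    ¬ EventuallyPeriodic u := by
  classical
  intro h
  have hu := hR.recurrent (by omega)
  have hex := hu.periodic_of_eventuallyPeriodic h
  obtain ⟨hp, hper⟩ := Nat.find_spec hex
  set p := Nat.find hex
  set w := factorAt u 0 p
  have hw : IsFactor u w := isFactor_factorAt u 0 p
  have hinf := hu.infinite_occursAt hw
  -- consecutive occurrences of `w` are periods of `u`, hence exactly `p` apart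
  have hret : ∀ e, returnWord u w e = w := by
    intro e
    have hj := Nat.nth_mem_of_infinite hinf e
    have hk := Nat.nth_mem_of_infinite hinf (e + 1)
    have hjk := Nat.nth_strictMono hinf (Nat.lt_add_one e)
    have hjp : OccursAt u w (nth (OccursAt u w) e + p) :=
      hj.of_agree fun i _ => by rw [Nat.add_right_comm, hper]
    have hle : nth (OccursAt u w) (e + 1) ≤ nth (OccursAt u w) e + p := by
      by_contra! hlt
      exact absurd (Nat.le_nth_of_lt_nth_succ hlt hjp) (by omega)
    have hge : p ≤ nth (OccursAt u w) (e + 1) - nth (OccursAt u w) e :=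
      Nat.find_min' hex ⟨by omega, (hper.of_occursAt_factorAt hp hj).nat_sub
        (hper.of_occursAt_factorAt hp hk) hjk.le⟩
    rw [returnWord, show nth (OccursAt u w) (e + 1) - nth (OccursAt u w) e = p by omega]
    simpa [OccursAt, w] using hj
  have := (hR w hw).2
  rw [returnWords_eq_range hu hw, show returnWord u w = fun _ => w from funext hret,
    Set.range_const, Set.ncard_singleton] at this
  omega

end Periodicity

section Gaps

def HasGapsOfLength (P : ℕ → Prop) (m : ℕ) : Prop :=
  ∀ j, P j → ¬ P (j + 1) → (∀ t, 1 ≤ t → t ≤ m → ¬ P (j + t)) ∧ P (j + m + 1)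

variable {P Q : ℕ → Prop} {m q : ℕ}

lemma hasGapsOfLength_of_nth (hP : (Set.ofPred P).Infinite)
    (h : ∀ f, nth P (f + 1) - nth P f - 1 = 0 ∨ nth P (f + 1) - nth P f - 1 = m) :
    HasGapsOfLength P m := by
  intro j hj hj₁
  obtain ⟨f, rfl⟩ := Nat.subset_range_nth (p := P) hj
  have hlt := Nat.nth_strictMono hP (Nat.lt_add_one f)
  have hnext : nth P (f + 1) = nth P f + m + 1 := by
    rcases h f with h | h
    · exact absurd (show nth P (f + 1) = nth P f + 1 by omega ▸ Nat.nth_mem_of_infinite hP _)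
        hj₁
    · omega
  refine ⟨fun t ht₁ ht₂ htP => ?_, hnext ▸ Nat.nth_mem_of_infinite hP _⟩
  have := Nat.le_nth_of_lt_nth_succ (show nth P f + t < nth P (f + 1) by omega) htP
  omega

lemma HasGapsOfLength.one_le (hP : HasGapsOfLength P m) {j : ℕ} (hj : P j)
    (hj₁ : ¬ P (j + 1)) : 1 ≤ m := by
  by_contra hm
  exact hj₁ (by simpa [show m = 0 by omega] using (hP j hj hj₁).2)

/-- One period of the pattern that starts after a descent `P j, ¬ P (j + 1)`. -/
lemma HasGapsOfLength.pattern (hP : HasGapsOfLength P m) (hQ : HasGapsOfLength Q q)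
    (hPQ : ∀ i, Q i ↔ ¬ P i) {j : ℕ} (hj : P j) (hj₁ : ¬ P (j + 1)) :
    (∀ t, 1 ≤ t → t ≤ m + q → (P (j + t) ↔ m < t)) ∧ P (j + (m + q)) ∧
      ¬ P (j + (m + q) + 1) := by
  obtain ⟨hgap, hend⟩ := hP j hj hj₁
  have hm := hP.one_le hj hj₁
  obtain ⟨hrun, hrun_end⟩ := hQ (j + m) ((hPQ _).2 (hgap m hm le_rfl))
    (by rw [hPQ, not_not]; exact hend)
  simp only [hPQ, not_not] at hrun hrun_end
  have hq : 1 ≤ q := by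
    by_contra hq
    exact hrun_end (by simpa [show q = 0 by omega] using hend)
  refine ⟨fun t ht₁ ht₂ => ?_, by simpa [Nat.add_assoc] using hrun q hq le_rfl,
    by simpa [Nat.add_assoc] using hrun_end⟩
  by_cases htm : t ≤ m
  · simp only [hgap t ht₁ htm, false_iff, not_lt, htm]
  · rw [show j + t = j + m + (t - m) by omega]
    exact iff_of_true (hrun (t - m) (by omega) (by omega)) (by omega)

lemma HasGapsOfLength.eventually_periodic (hP : HasGapsOfLength P m) (hQ : HasGapsOfLength Q q)
    (hPQ : ∀ i, Q i ↔ ¬ P i) {j : ℕ} (hj : P j) (hj₁ : ¬ P (j + 1)) :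
    ∀ n, j < n → (P (n + (m + q)) ↔ P n) := by
  have hdesc : ∀ c, P (j + c * (m + q)) ∧ ¬ P (j + c * (m + q) + 1) := by
    intro c
    induction c with
    | zero => simpa using ⟨hj, hj₁⟩
    | succ c ih =>
      have := (hP.pattern hQ hPQ ih.1 ih.2).2
      rwa [Nat.succ_mul, ← Nat.add_assoc]
  intro n hn
  have hL : 0 < m + q := by have := hP.one_le hj hj₁; omega
  obtain ⟨c, t, ht₁, ht₂, rfl⟩ :
      ∃ c t, 1 ≤ t ∧ t ≤ m + q ∧ n = j + c * (m + q) + t :=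
    ⟨(n - j - 1) / (m + q), (n - j - 1) % (m + q) + 1, by omega,
      Nat.mod_lt _ hL, by have := Nat.div_add_mod (n - j - 1) (m + q); grind⟩
  have hnext := hdesc (c + 1)
  rw [Nat.succ_mul, ← Nat.add_assoc] at hnext
  rw [show j + c * (m + q) + t + (m + q) = j + c * (m + q) + (m + q) + t by omega,
    (hP.pattern hQ hPQ hnext.1 hnext.2).1 t ht₁ ht₂,
    (hP.pattern hQ hPQ (hdesc c).1 (hdesc c).2).1 t ht₁ ht₂]

end Gaps

lemma eq_or_eq_of_ncard_range_eq_two {ι β : Type*} {g : ι → β} (hg : (Set.range g).ncard = 2)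
    {i j : ι} (hij : g i ≠ g j) (k : ι) : g k = g i ∨ g k = g j := by
  obtain ⟨a, b, -, hab⟩ := Set.ncard_eq_two.1 hg
  have hmem : ∀ l, g l = a ∨ g l = b := fun l => by
    simpa [hab] using Set.mem_range_self (f := g) l
  grind

lemma eq_iff_eq_of_ncard_range_eq_two {ι β γ : Type*} {f : ι → β} {g : ι → γ}
    (hf : (Set.range f).ncard = 2) (hg : ∀ i j, f i = f j → g i = g j) {i j : ι}
    (hij : g i ≠ g j) (k : ι) : g k = g i ↔ f k = f i :=
  ⟨fun h => (eq_or_eq_of_ncard_range_eq_two hf (fun e => hij (hg _ _ e)) k).resolve_right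
    fun h' => hij (h ▸ hg _ _ h'), hg k i⟩

lemma exists_ne_of_ncard_range_eq_two {ι β : Type*} {g : ι → β} (hg : (Set.range g).ncard = 2)
    (i : ι) : ∃ j, g j ≠ g i := by
  by_contra! h
  rw [show Set.range g = {g i} from Set.range_subset_singleton.2 (funext h) |>.antisymm
    (Set.singleton_subset_iff.2 ⟨i, rfl⟩), Set.ncard_singleton] at hg
  omega

section Derived

variable {u : ℕ → A} {s : List A}

/-- The occurrences of `s` followed by `x` cut the word into blocks `vX vY ⋯ vY`. -/
lemma returnWord_append_singleton (hu : Recurrent u) (hs : IsFactor u s) {x : A}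
    {vX vY : List A} (hcover : ∀ e, returnWord u s e = vX ∨ returnWord u s e = vY)
    (hx : ∀ e, u (nth (OccursAt u s) e + s.length) = x ↔ returnWord u s e = vX)
    (hX : (Set.ofPred fun e => returnWord u s e = vX).Infinite) (f : ℕ) :
    returnWord u (s ++ [x]) f = vX ++ (List.replicate (nth (returnWord u s · = vX) (f + 1)
      - nth (returnWord u s · = vX) f - 1) vY).flatten := by
  set P := (returnWord u s · = vX)
  have hinf := hu.infinite_occursAt hs
  have hpred : (fun e => OccursAt u (s ++ [x]) (nth (OccursAt u s) e)) = P :=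
    funext fun e => propext <| occursAt_snoc.trans <|
      (and_iff_right (Nat.nth_mem_of_infinite hinf e)).trans (hx e)
  have hsx : (Set.ofPred (OccursAt u (s ++ [x]))).Infinite := by
    obtain ⟨e, he⟩ := hX.nonempty
    exact hu.infinite_occursAt ⟨nth (OccursAt u s) e, by rw [congrFun hpred e]; exact he⟩
  have hocc : ∀ f, nth (OccursAt u (s ++ [x])) f = nth (OccursAt u s) (nth P f) := fun f => by
    rw [← hpred, Nat.nth_comp_of_strictMono (Nat.nth_strictMono hinf)
      (fun k hk => Nat.subset_range_nth (p := OccursAt u s) (occursAt_snoc.1 hk).1)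
      fun hfin => absurd hfin hsx]
  obtain ⟨k, hk⟩ : ∃ k, nth P (f + 1) = nth P f + (k + 1) :=
    ⟨nth P (f + 1) - nth P f - 1, by have := Nat.nth_strictMono hX (Nat.lt_add_one f); omega⟩
  have hblock : ((List.range (k + 1)).map fun t => returnWord u s (nth P f + t))
      = vX :: List.replicate k vY := by
    rw [List.range_succ_eq_map, List.map_cons, List.map_map, Nat.add_zero,
      Nat.nth_mem_of_infinite hX f]
    refine congrArg _ (List.eq_replicate_iff.2 ⟨by simp, ?_⟩)
    simp only [List.mem_map, List.mem_range, Function.comp_apply, forall_exists_index, and_imp]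
    rintro _ t ht rfl
    refine (hcover _).resolve_left fun hP => ?_
    have := Nat.le_nth_of_lt_nth_succ (p := P) (show nth P f + (t + 1) < nth P (f + 1) by omega) hP
    omega
  rw [returnWord, hocc, hocc, hk, factorAt_nth_eq_flatten hinf, hblock, List.flatten_cons,
    show nth P f + (k + 1) - nth P f - 1 = k by omega]

lemma PropertyR.hasGapsOfLength (hR : PropertyR u 2) (hs : IsFactor u s) {x : A}
    {vX vY : List A} (hvY : vY ≠ [])
    (hcover : ∀ e, returnWord u s e = vX ∨ returnWord u s e = vY)
    (hx : ∀ e, u (nth (OccursAt u s) e + s.length) = x ↔ returnWord u s e = vX)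
    (hX : (Set.ofPred fun e => returnWord u s e = vX).Infinite)
    (hXX : ∃ e, returnWord u s e = vX ∧ returnWord u s (e + 1) = vX) :
    ∃ m, HasGapsOfLength (returnWord u s · = vX) m := by
  set P := (returnWord u s · = vX)
  set G := fun f => nth P (f + 1) - nth P f - 1
  have hu := hR.recurrent two_ne_zero
  obtain ⟨e, he, he₁⟩ := hXX
  have hsx : IsFactor u (s ++ [x]) :=
    ⟨_, occursAt_snoc.2 ⟨Nat.nth_mem_of_infinite (hu.infinite_occursAt hs) e, (hx e).2 he⟩⟩
  have hinj : Function.Injective fun k => vX ++ (List.replicate k vY).flatten := fun k k' h => by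
    have := congrArg List.length h
    simp only [List.length_append, List.length_flatten, List.map_replicate, List.sum_replicate,
      smul_eq_mul, Nat.add_left_cancel_iff] at this
    exact Nat.eq_of_mul_eq_mul_right (List.length_pos_iff.2 hvY) this
  have hG : (Set.range G).ncard = 2 := by
    have := (hR _ hsx).2
    rwa [returnWords_eq_range hu hsx, show returnWord u (s ++ [x])
      = (fun k => vX ++ (List.replicate k vY).flatten) ∘ G from
      funext (returnWord_append_singleton hu hs hcover hx hX), Set.range_comp,
      Set.ncard_image_of_injective _ hinj] at this
  obtain ⟨f₀, rfl⟩ := Nat.subset_range_nth (p := P) he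
  have hG₀ : G f₀ = 0 := by
    have := Nat.nth_strictMono hX (Nat.lt_add_one f₀)
    by_contra hne
    simp only [G] at hne
    have := Nat.le_nth_of_lt_nth_succ (p := P)
      (show nth P f₀ + 1 < nth P (f₀ + 1) by omega) he₁
    omega
  obtain ⟨f₁, hf₁⟩ := exists_ne_of_ncard_range_eq_two hG f₀
  exact ⟨G f₁, hasGapsOfLength_of_nth hX fun f => hG₀ ▸ eq_or_eq_of_ncard_range_eq_two hG
    (Ne.symm hf₁) f⟩

end Derived

section Bispecial

variable {u : ℕ → A} {s : List A}

lemma Recurrent.exists_letters_around_nth (hu : Recurrent u) {c d : A}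
    (h : IsFactor u (c :: (s ++ [d]))) (T : ℕ) :
    ∃ e, T ≤ e ∧ u (nth (OccursAt u s) (e + 1) - 1) = c ∧
      u (nth (OccursAt u s) (e + 1) + s.length) = d := by
  have hinf := hu.infinite_occursAt (h.infix (v := s) ⟨[c], [d], by simp⟩)
  obtain ⟨t, ht, hTt⟩ := (hu.infinite_occursAt h).exists_gt (nth (OccursAt u s) T)
  obtain ⟨htc, hts⟩ := occursAt_cons.1 ht
  obtain ⟨hts, htd⟩ := occursAt_snoc.1 hts
  obtain ⟨i, hi⟩ := Nat.subset_range_nth (p := OccursAt u s) hts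
  have hTi : T < i := (Nat.nth_lt_nth hinf).1 (by omega)
  obtain ⟨e, rfl⟩ : ∃ e, i = e + 1 := ⟨i - 1, by omega⟩
  exact ⟨e, by omega, by rw [hi]; simpa using htc, by rw [hi]; exact htd⟩

lemma PropertyR.exists_returnWord_transitions (hR : PropertyR u 2) (hs : IsFactor u s)
    {a b x y : A} (hab : a ≠ b) (hxy : x ≠ y)
    (hax : IsFactor u (a :: (s ++ [x]))) (hay : IsFactor u (a :: (s ++ [y])))
    (hbx : IsFactor u (b :: (s ++ [x]))) (hby : IsFactor u (b :: (s ++ [y]))) :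
    ∃ vX vY, vX ≠ vY ∧ (∀ e, returnWord u s e = vX ∨ returnWord u s e = vY) ∧
      (∀ e, u (nth (OccursAt u s) e + s.length) = x ↔ returnWord u s e = vX) ∧
      (∀ e, u (nth (OccursAt u s) e + s.length) = y ↔ returnWord u s e = vY) ∧
      ∀ V V', (V = vX ∨ V = vY) → (V' = vX ∨ V' = vY) →
        ∀ T, ∃ e, T ≤ e ∧ returnWord u s e = V ∧ returnWord u s (e + 1) = V' := by
  have hu := hR.recurrent two_ne_zero
  have hinf := hu.infinite_occursAt hs
  have hcard : (Set.range (returnWord u s)).ncard = 2 := returnWords_eq_range hu hs ▸ (hR s hs).2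
  have hletters : ∀ c d, (c = a ∨ c = b) → (d = x ∨ d = y) → ∀ T, ∃ e, T ≤ e ∧
      u (nth (OccursAt u s) (e + 1) - 1) = c ∧ u (nth (OccursAt u s) (e + 1) + s.length) = d := by
    rintro c d (rfl | rfl) (rfl | rfl) <;> exact hu.exists_letters_around_nth ‹_›
  obtain ⟨eX, -, heXa, heXx⟩ := hletters a x (.inl rfl) (.inl rfl) 0
  obtain ⟨eY, -, -, heYy⟩ := hletters a y (.inl rfl) (.inr rfl) 0
  obtain ⟨eB, -, heBb, -⟩ := hletters b x (.inr rfl) (.inl rfl) 0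
  have hnext := fun i j => letter_after_eq_of_returnWord_eq (u := u) hinf (e := i) (e' := j)
  have hlast := fun i j => letter_before_eq_of_returnWord_eq (u := u) hinf (e := i) (e' := j)
  have hx := eq_iff_eq_of_ncard_range_eq_two hcard hnext (i := eX + 1) (heXx ▸ heYy ▸ hxy)
  have hy := eq_iff_eq_of_ncard_range_eq_two hcard hnext (i := eY + 1) (heYy ▸ heXx ▸ hxy.symm)
  have ha := eq_iff_eq_of_ncard_range_eq_two hcard hlast (i := eX) (heXa ▸ heBb ▸ hab)
  have hb := eq_iff_eq_of_ncard_range_eq_two hcard hlast (i := eB) (heBb ▸ heXa ▸ hab.symm)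
  simp only [heXx, heYy, heXa, heBb] at hx hy ha hb
  have hXY : returnWord u s (eX + 1) ≠ returnWord u s (eY + 1) :=
    fun h => hxy ((hx _).2 h.symm ▸ heYy)
  refine ⟨_, _, hXY, eq_or_eq_of_ncard_range_eq_two hcard hXY, hx, hy, ?_⟩
  intro V V' hV hV' T
  obtain ⟨c, hc, hcV⟩ : ∃ c, (c = a ∨ c = b) ∧
      ∀ e, u (nth (OccursAt u s) (e + 1) - 1) = c → returnWord u s e = V := by
    have hAB : returnWord u s eX ≠ returnWord u s eB := fun h => hab ((ha _).2 h.symm ▸ heBb)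
    obtain ⟨i, rfl⟩ : ∃ i, returnWord u s i = V := by
      rcases hV with rfl | rfl
      exacts [⟨_, rfl⟩, ⟨_, rfl⟩]
    rcases eq_or_eq_of_ncard_range_eq_two hcard hAB i with h | h <;> rw [h]
    exacts [⟨a, .inl rfl, fun e => (ha e).1⟩, ⟨b, .inr rfl, fun e => (hb e).1⟩]
  obtain ⟨d, hd, hdV'⟩ : ∃ d, (d = x ∨ d = y) ∧
      ∀ e, u (nth (OccursAt u s) e + s.length) = d → returnWord u s e = V' := by
    rcases hV' with rfl | rfl
    exacts [⟨x, .inl rfl, fun e => (hx e).1⟩, ⟨y, .inr rfl, fun e => (hy e).1⟩]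
  obtain ⟨e, hTe, hec, hed⟩ := hletters c d hc hd T
  exact ⟨e, hTe, hcV e hec, hdV' (e + 1) hed⟩

lemma PropertyR.false_of_four_extensions (hR : PropertyR u 2) (hs : IsFactor u s)
    {a b x y : A} (hab : a ≠ b) (hxy : x ≠ y)
    (hax : IsFactor u (a :: (s ++ [x]))) (hay : IsFactor u (a :: (s ++ [y])))
    (hbx : IsFactor u (b :: (s ++ [x]))) (hby : IsFactor u (b :: (s ++ [y]))) : False := by
  obtain ⟨vX, vY, hXY, hcover, hx, hy, htrans⟩ :=
    hR.exists_returnWord_transitions hs hab hxy hax hay hbx hby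
  have hinf := (hR.recurrent two_ne_zero).infinite_occursAt hs
  have hX : vX = vX ∨ vX = vY := .inl rfl
  have hY : vY = vX ∨ vY = vY := .inr rfl
  have hinfinite : ∀ V, (V = vX ∨ V = vY) → (Set.ofPred (returnWord u s · = V)).Infinite :=
    fun V hV => Set.infinite_of_forall_exists_gt fun T => by
      obtain ⟨e, hTe, -, he⟩ := htrans V V hV hV T
      exact ⟨e + 1, he, by omega⟩
  have hne : ∀ V, (V = vX ∨ V = vY) → V ≠ [] := fun V hV => by
    obtain ⟨e, -, he, -⟩ := htrans V V hV hV 0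
    exact he ▸ returnWord_ne_nil hinf e
  have hrepeat : ∀ V, (V = vX ∨ V = vY) →
      ∃ e, returnWord u s e = V ∧ returnWord u s (e + 1) = V := fun V hV => by
    obtain ⟨e, -, he⟩ := htrans V V hV hV 0
    exact ⟨e, he⟩
  obtain ⟨m, hm⟩ :=
    hR.hasGapsOfLength hs (hne vY hY) hcover hx (hinfinite vX hX) (hrepeat vX hX)
  obtain ⟨q, hq⟩ := hR.hasGapsOfLength hs (hne vX hX) (fun e => (hcover e).symm) hy
    (hinfinite vY hY) (hrepeat vY hY)
  obtain ⟨j, -, hj, hj₁⟩ := htrans vX vY hX hY 0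
  have hj₁' : ¬ returnWord u s (j + 1) = vX := hj₁ ▸ Ne.symm hXY
  have hPQ : ∀ e, returnWord u s e = vY ↔ ¬ returnWord u s e = vX :=
    fun e => ⟨fun h h' => hXY (h'.symm.trans h), (hcover e).resolve_left⟩
  have hper := hm.eventually_periodic hq hPQ hj hj₁'
  refine (hR.not_eventuallyPeriodic le_rfl) <|
    eventuallyPeriodic_of_returnWord_add hinf (e₀ := j + 1) (p := m + q)
    (by have := hm.one_le hj hj₁'; omega) fun e he => ?_
  have := hper e (by omega)
  rcases hcover e with h | h <;> rcases hcover (e + (m + q)) with h' | h' <;> grind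

end Bispecial

section ForwardDirection

variable {u : ℕ → A}

lemma RightSpecial.of_cons [Finite A] {c : A} {w : List A} (h : RightSpecial u (c :: w)) :
    RightSpecial u w :=
  h.trans <| Set.ncard_le_ncard (fun _ hb => IsFactor.infix hb ⟨[c], [], by simp⟩)
    (Set.toFinite _)

lemma RightSpecial.isFactor_append_singleton [Fintype A] (hA : Fintype.card A = 2) {w : List A}
    (h : RightSpecial u w) (b : A) : IsFactor u (w ++ [b]) := by
  have : rightExt u w = Set.univ := Set.eq_of_subset_of_ncard_le (Set.subset_univ _)
    (by rw [Set.ncard_univ, Nat.card_eq_fintype_card, hA]; exact h)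
  exact show b ∈ rightExt u w from this ▸ Set.mem_univ b

lemma PropertyR.eq_of_rightSpecial [Fintype A] (hA : Fintype.card A = 2) (hR : PropertyR u 2)
    {v w : List A} (hv : IsFactor u v) (hw : IsFactor u w) (hl : v.length = w.length)
    (hvs : RightSpecial u v) (hws : RightSpecial u w) : v = w := by
  induction v generalizing w with
  | nil => exact (List.length_eq_zero_iff.1 hl.symm).symm
  | cons c v ih =>
    obtain ⟨c', w, rfl⟩ := List.exists_cons_of_length_eq_add_one hl.symm
    have hvw : v = w := ih (hv.infix (List.infix_cons (List.infix_refl v)))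
      (hw.infix (List.infix_cons (List.infix_refl w))) (by simpa using hl) hvs.of_cons hws.of_cons
    subst hvw
    by_contra hcc
    obtain ⟨x, y, hxy⟩ := Fintype.exists_pair_of_one_lt_card (show 1 < Fintype.card A by omega)
    exact hR.false_of_four_extensions (hw.infix (List.infix_cons (List.infix_refl v)))
      (fun h => hcc (by rw [h])) hxy (hvs.isFactor_append_singleton hA x)
      (hvs.isFactor_append_singleton hA y) (hws.isFactor_append_singleton hA x)
      (hws.isFactor_append_singleton hA y)

open scoped Classical in
lemma PropertyR.card_rightSpecial_eq_one [Fintype A] (hA : Fintype.card A = 2)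
    (hR : PropertyR u 2) (n : ℕ) :
    ((factorsOfLength u n).filter (RightSpecial u)).card = 1 := by
  obtain ⟨w, hw, hl, hws⟩ : ∃ w, IsFactor u w ∧ w.length = n ∧ RightSpecial u w := by
    by_contra! h
    exact hR.not_eventuallyPeriodic le_rfl (eventuallyPeriodic_of_forall_not_rightSpecial h)
  refine Finset.card_eq_one.2 ⟨w, Finset.eq_singleton_iff_unique_mem.2 ⟨?_, fun v hv => ?_⟩⟩
  · simpa [mem_factorsOfLength] using ⟨⟨hl, hw⟩, hws⟩
  · simp only [Finset.mem_filter, mem_factorsOfLength] at hv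
    exact hR.eq_of_rightSpecial hA hv.1.2 hw (hv.1.1.trans hl.symm) hv.2 hws

lemma PropertyR.complexity_eq [Fintype A] (hA : Fintype.card A = 2) (hR : PropertyR u 2)
    (n : ℕ) : Complexity u n = n + 1 := by
  induction n with
  | zero => exact complexity_zero u
  | succ n ih => rw [complexity_succ_eq_add_card_rightSpecial hA, ih,
      hR.card_rightSpecial_eq_one hA]

end ForwardDirection

section BackwardDirection

variable {u : ℕ → A}

lemma factorAt_shift (u : ℕ → A) (B i n : ℕ) :
    factorAt (fun x => u (x + B)) i n = factorAt u (i + B) n := by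
  simp only [factorAt, Nat.add_right_comm]

lemma EventuallyPeriodic.of_shift {B : ℕ} (h : EventuallyPeriodic fun x => u (x + B)) :
    EventuallyPeriodic u := by
  obtain ⟨p, hp, N, hN⟩ := h
  refine ⟨p, hp, N + B, fun n hn => ?_⟩
  have := hN (n - B) (by omega)
  simp only at this
  rwa [show n - B + p + B = n + p by omega, show n - B + B = n by omega] at this

/-- A factor occurring only once is missing from the suffix after it, whose complexity
therefore drops to at most `n` at length `n`. -/
lemma recurrent_of_complexity_le [Finite A] (hC : ∀ n, Complexity u n ≤ n + 1)
    (hu : ¬ EventuallyPeriodic u) : Recurrent u := by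
  classical
  rintro w ⟨j, hj⟩
  by_contra! honce
  set v := fun x => u (x + (j + 1))
  have hsub : factorsOfLength v w.length ⊆ (factorsOfLength u w.length).erase w := by
    intro w' hw'
    obtain ⟨hl, i, hi⟩ := mem_factorsOfLength.1 hw'
    have hi' : OccursAt u w' (i + (j + 1)) := by rwa [OccursAt, ← factorAt_shift]
    refine Finset.mem_erase.2 ⟨?_, mem_factorsOfLength.2 ⟨hl, _, hi'⟩⟩
    rintro rfl
    exact honce j _ (by omega) hj hi'
  have hle : Complexity v w.length ≤ w.length := by
    have := Finset.card_le_card hsub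
    rw [Finset.card_erase_of_mem (mem_factorsOfLength.2 ⟨rfl, j, hj⟩), ← complexity_eq_card,
      ← complexity_eq_card] at this
    have := hC w.length
    omega
  exact hu (eventuallyPeriodic_of_complexity_le hle).of_shift

variable {w : List A}

lemma exists_returnWord_ne (hw : (Set.ofPred (OccursAt u w)).Infinite)
    (hu : ¬ EventuallyPeriodic u) : ∃ e, returnWord u w e ≠ returnWord u w 0 := by
  by_contra! h
  exact hu <| eventuallyPeriodic_of_returnWord_add hw (e₀ := 0) one_pos fun e _ => by
    rw [h (e + 1), h e]

end BackwardDirection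

section CommonSuffix

open scoped Classical

variable {u : ℕ → A} {w : List A}

/-- The length of the longest common suffix of the complete return words
`returnWord u w e ++ w` and `returnWord u w e' ++ w`, which end at the positions
`nth (OccursAt u w) (e + 1) + w.length` and `nth (OccursAt u w) (e' + 1) + w.length`. -/
noncomputable def commonSuffixLength (u : ℕ → A) (w : List A) (e e' : ℕ) : ℕ :=
  Nat.findGreatest (fun t => factorAt u (nth (OccursAt u w) (e + 1) + w.length - t) t
      = factorAt u (nth (OccursAt u w) (e' + 1) + w.length - t) t)
    (min ((returnWord u w e).length + w.length) ((returnWord u w e').length + w.length))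

lemma commonSuffixLength_comm (e e' : ℕ) :
    commonSuffixLength u w e e' = commonSuffixLength u w e' e := by
  unfold commonSuffixLength
  rw [min_comm]
  congr 1
  ext t
  exact eq_comm

lemma length_le_commonSuffixLength (hw : (Set.ofPred (OccursAt u w)).Infinite) (e e' : ℕ) :
    w.length ≤ commonSuffixLength u w e e' := by
  unfold commonSuffixLength
  refine Nat.le_findGreatest (by omega) ?_
  rw [Nat.add_sub_cancel, Nat.add_sub_cancel]
  exact (Nat.nth_mem_of_infinite hw _).trans (Nat.nth_mem_of_infinite hw _).symm

lemma factorAt_commonSuffixLength (hw : (Set.ofPred (OccursAt u w)).Infinite) (e e' : ℕ) :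
    factorAt u (nth (OccursAt u w) (e + 1) + w.length - commonSuffixLength u w e e')
        (commonSuffixLength u w e e')
      = factorAt u (nth (OccursAt u w) (e' + 1) + w.length - commonSuffixLength u w e e')
        (commonSuffixLength u w e e') := by
  unfold commonSuffixLength
  refine Nat.findGreatest_spec (m := w.length) (by omega)
    (P := fun t => factorAt u (nth (OccursAt u w) (e + 1) + w.length - t) t
      = factorAt u (nth (OccursAt u w) (e' + 1) + w.length - t) t) ?_
  simp only [Nat.add_sub_cancel]
  exact (Nat.nth_mem_of_infinite hw _).trans (Nat.nth_mem_of_infinite hw _).symm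

/-- No complete return word is a suffix of another one: otherwise `w` would occur strictly
inside the longer one, or the two return words would coincide. -/
lemma commonSuffixLength_lt (hw : (Set.ofPred (OccursAt u w)).Infinite) {e e' : ℕ}
    (hne : returnWord u w e ≠ returnWord u w e') :
    commonSuffixLength u w e e' < (returnWord u w e).length + w.length := by
  have hT := factorAt_commonSuffixLength hw e e'
  have hle : commonSuffixLength u w e e' ≤ min _ _ := Nat.findGreatest_le _
  set T := commonSuffixLength u w e e'
  by_contra! hge
  have hlen := length_returnWord (u := u) (w := w) e
  have hlen' := length_returnWord (u := u) (w := w) e'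
  have hj := Nat.nth_strictMono hw (Nat.lt_add_one e)
  have hj' := Nat.nth_strictMono hw (Nat.lt_add_one e')
  set j := nth (OccursAt u w) e
  set j' := nth (OccursAt u w) e'
  set k := nth (OccursAt u w) (e + 1)
  set k' := nth (OccursAt u w) (e' + 1)
  set o := k' - (k - j)
  rw [show k + w.length - T = j by omega, show k' + w.length - T = o by omega] at hT
  have hwo : OccursAt u w o := by
    rw [OccursAt, ← factorAt_take u o (show w.length ≤ T by omega), ← hT, factorAt_take u j
      (by omega)]
    exact Nat.nth_mem_of_infinite hw e
  rcases Nat.lt_or_eq_of_le (show k - j ≤ k' - j' by omega) with hlt | heq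
  · have := Nat.le_nth_of_lt_nth_succ (show o < k' by omega) hwo
    omega
  · apply hne
    rw [returnWord, returnWord, ← factorAt_take u j (show k - j ≤ T by omega), hT,
      factorAt_take u o (by omega), show o = j' by omega, heq]

lemma commonSuffixLength_lt' (hw : (Set.ofPred (OccursAt u w)).Infinite) {e e' : ℕ}
    (hne : returnWord u w e ≠ returnWord u w e') :
    commonSuffixLength u w e e' < (returnWord u w e').length + w.length :=
  commonSuffixLength_comm (u := u) e e' ▸ commonSuffixLength_lt hw (Ne.symm hne)

lemma factorAt_ne_of_commonSuffixLength_lt {e e' t : ℕ} (ht : commonSuffixLength u w e e' < t)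
    (ht' : t ≤ min ((returnWord u w e).length + w.length)
      ((returnWord u w e').length + w.length)) :
    factorAt u (nth (OccursAt u w) (e + 1) + w.length - t) t
      ≠ factorAt u (nth (OccursAt u w) (e' + 1) + w.length - t) t := by
  unfold commonSuffixLength at ht
  exact Nat.findGreatest_is_greatest ht ht'

lemma letter_before_commonSuffix_ne (hw : (Set.ofPred (OccursAt u w)).Infinite) {e e' : ℕ}
    (hne : returnWord u w e ≠ returnWord u w e') :
    u (nth (OccursAt u w) (e + 1) + w.length - commonSuffixLength u w e e' - 1)
      ≠ u (nth (OccursAt u w) (e' + 1) + w.length - commonSuffixLength u w e e' - 1) := by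
  intro heq
  have h₁ := commonSuffixLength_lt hw hne
  have h₂ := commonSuffixLength_lt' hw hne
  have hT := factorAt_commonSuffixLength hw e e'
  have hl₁ := length_returnWord (u := u) (w := w) e
  have hl₂ := length_returnWord (u := u) (w := w) e'
  set T := commonSuffixLength u w e e'
  refine factorAt_ne_of_commonSuffixLength_lt (Nat.lt_add_one T) (by omega) ?_
  rw [factorAt_succ, factorAt_succ, show nth (OccursAt u w) (e + 1) + w.length - (T + 1) + 1
    = nth (OccursAt u w) (e + 1) + w.length - T by omega, show nth (OccursAt u w) (e' + 1)
    + w.length - (T + 1) + 1 = nth (OccursAt u w) (e' + 1) + w.length - T by omega, hT,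
    Nat.sub_add_eq, heq, ← Nat.sub_add_eq]

lemma leftSpecial_commonSuffix [Finite A] (hw : (Set.ofPred (OccursAt u w)).Infinite) {e e' : ℕ}
    (hne : returnWord u w e ≠ returnWord u w e') :
    LeftSpecial u (factorAt u (nth (OccursAt u w) (e + 1) + w.length - commonSuffixLength u w e e')
      (commonSuffixLength u w e e')) := by
  have h₁ := commonSuffixLength_lt hw hne
  have h₂ := commonSuffixLength_lt' hw hne
  have hT := factorAt_commonSuffixLength hw e e'
  have hl₁ := length_returnWord (u := u) (w := w) e
  have hl₂ := length_returnWord (u := u) (w := w) e'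
  set T := commonSuffixLength u w e e'
  refine leftSpecial_of_mem (letter_before_commonSuffix_ne hw hne) (mem_leftExt ?_)
    (mem_leftExt ?_)
  · rw [show nth (OccursAt u w) (e + 1) + w.length - T - 1 + 1
      = nth (OccursAt u w) (e + 1) + w.length - T by omega]
    exact occursAt_factorAt u _ _
  · rw [show nth (OccursAt u w) (e' + 1) + w.length - T - 1 + 1
      = nth (OccursAt u w) (e' + 1) + w.length - T by omega, hT]
    exact occursAt_factorAt u _ _

end CommonSuffix

section ThreeReturnWords

variable {u : ℕ → A} {w : List A}

lemma LeftSpecial.take [Finite A] {v : List A} (h : LeftSpecial u v) (n : ℕ) :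
    LeftSpecial u (v.take n) :=
  h.trans <| Set.ncard_le_ncard
    (fun a ha => IsFactor.infix ha (List.take_prefix (n + 1) (a :: v)).isInfix) (Set.toFinite _)

lemma false_of_pairwise_ne [Fintype A] (hA : Fintype.card A = 2) {a b c : A} (hab : a ≠ b)
    (hac : a ≠ c) (hbc : b ≠ c) : False := by
  classical
  have := Finset.card_le_univ ({a, b, c} : Finset A)
  rw [Finset.card_insert_of_notMem (by simp [hab, hac]), Finset.card_pair hbc, hA] at this
  omega

/-- Cut to the length of the shallower common suffix, the deeper one stays left special, hence
equals the shallower one; so it ends with `w`, which then occurs strictly inside a return word. -/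
lemma false_of_commonSuffixLength_lt [Finite A] (hu : Recurrent u)
    (hC : ∀ n, Complexity u (n + 1) ≤ Complexity u n + 1)
    (hw : (Set.ofPred (OccursAt u w)).Infinite) {e₁ e₂ e₃ e₄ : ℕ}
    (h₁₂ : returnWord u w e₁ ≠ returnWord u w e₂)
    (h₃₄ : returnWord u w e₃ ≠ returnWord u w e₄)
    (hlt : commonSuffixLength u w e₁ e₂ < commonSuffixLength u w e₃ e₄) : False := by
  have hz := leftSpecial_commonSuffix hw h₁₂
  have hz' := (leftSpecial_commonSuffix hw h₃₄).take (commonSuffixLength u w e₁ e₂)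
  have hwt := length_le_commonSuffixLength hw e₁ e₂
  have ht := commonSuffixLength_lt hw h₁₂
  have ht' := commonSuffixLength_lt hw h₃₄
  have hl₁ := length_returnWord (u := u) (w := w) e₁
  have hl₃ := length_returnWord (u := u) (w := w) e₃
  have hnth := Nat.nth_strictMono hw (Nat.lt_add_one e₃)
  set t := commonSuffixLength u w e₁ e₂
  set t' := commonSuffixLength u w e₃ e₄
  set k₁ := nth (OccursAt u w) (e₁ + 1)
  set k₃ := nth (OccursAt u w) (e₃ + 1)
  rw [factorAt_take u _ hlt.le] at hz'
  have heq := hu.eq_of_leftSpecial (by simpa using hC t) (isFactor_factorAt u _ _)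
    (isFactor_factorAt u _ _) (by simp) hz hz'
  have hocc : OccursAt u w (k₃ + w.length - t' + (t - w.length)) := by
    have := congrArg (List.drop (t - w.length)) heq
    rw [factorAt_drop u _ (Nat.sub_le t w.length), factorAt_drop u _ (Nat.sub_le t w.length),
      show k₁ + w.length - t + (t - w.length) = k₁ by omega,
      show t - (t - w.length) = w.length by omega] at this
    rw [OccursAt, ← this]
    exact Nat.nth_mem_of_infinite hw (e₁ + 1)
  have := Nat.le_nth_of_lt_nth_succ
    (show k₃ + w.length - t' + (t - w.length) < k₃ by omega) hocc
  omega

lemma false_of_three_returnWords [Fintype A] (hA : Fintype.card A = 2) (hu : Recurrent u)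
    (hC : ∀ n, Complexity u (n + 1) ≤ Complexity u n + 1)
    (hw : (Set.ofPred (OccursAt u w)).Infinite) {e₁ e₂ e₃ : ℕ}
    (h₁₂ : returnWord u w e₁ ≠ returnWord u w e₂)
    (h₁₃ : returnWord u w e₁ ≠ returnWord u w e₃)
    (h₂₃ : returnWord u w e₂ ≠ returnWord u w e₃) : False := by
  have hdepth : ∀ {a b c d : ℕ}, returnWord u w a ≠ returnWord u w b →
      returnWord u w c ≠ returnWord u w d →
      commonSuffixLength u w a b = commonSuffixLength u w c d := fun hab hcd => by
    by_contra hne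
    exact (Ne.lt_or_gt hne).elim (false_of_commonSuffixLength_lt hu hC hw hab hcd)
      (false_of_commonSuffixLength_lt hu hC hw hcd hab)
  have h₁ := letter_before_commonSuffix_ne hw h₁₂
  have h₂ := letter_before_commonSuffix_ne hw h₁₃
  have h₃ := letter_before_commonSuffix_ne hw h₂₃
  rw [hdepth h₁₃ h₁₂] at h₂
  rw [hdepth h₂₃ h₁₂] at h₃
  exact false_of_pairwise_ne hA h₁ h₂ h₃

end ThreeReturnWords

lemma propertyR_two_of_sturmian [Fintype A] (hA : Fintype.card A = 2) {u : ℕ → A}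
    (hu : ¬ EventuallyPeriodic u) (hC : ∀ n, Complexity u n = n + 1) : PropertyR u 2 := by
  have hrec := recurrent_of_complexity_le (fun n => (hC n).le) hu
  intro w hw
  have hinf := hrec.infinite_occursAt hw
  obtain ⟨e, he⟩ := exists_returnWord_ne hinf hu
  have : returnWords u w = {returnWord u w 0, returnWord u w e} := by
    rw [returnWords_eq_range hrec hw]
    refine (Set.insert_subset (Set.mem_range_self 0)
      (Set.singleton_subset_iff.2 (Set.mem_range_self e))).antisymm' ?_
    rintro _ ⟨i, rfl⟩
    by_contra hi
    simp only [Set.mem_insert_iff, Set.mem_singleton_iff, not_or] at hi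
    exact false_of_three_returnWords hA hrec (fun n => by rw [hC, hC]) hinf hi.2 hi.1 he
  rw [this]
  exact ⟨Set.toFinite _, Set.ncard_pair he.symm⟩

/-- Vuillon: An infinite word over a two-letter alphabet satisfies
property `R_2` if and only if it is Sturmian, i.e., aperiodic with complexity
`C(n) = n + 1` for all `n`. -/
theorem propertyR_two_iff_sturmian [Fintype A] (hcard : Fintype.card A = 2)
    (u : ℕ → A) :
    PropertyR u 2 ↔ (¬ EventuallyPeriodic u ∧ ∀ n, Complexity u n = n + 1) :=
  ⟨fun hR => ⟨hR.not_eventuallyPeriodic le_rfl, hR.complexity_eq hcard⟩,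
    fun h => propertyR_two_of_sturmian hcard h.1 h.2⟩
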